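/- Let X be a simplicial set, G a simplicial group, and τ : X_{>0} → G a twisting function. If x ∈ X_{n+1} (n ≥ 0) is a degenerate simplex, then for every i ∈ S_{n+1} the simplex hatSz_i x ∈ (X ×_τ G)_{n+1} is degenerate (i.e. lies in the image of some degeneracy operator of X ×_τ G). -/

import Mathlib

open CategoryTheory Simplicial

/-- `memS n l i` means `i ∈ S_{n,l}`: a sequence of length `l` with
`0 ≤ i_s ≤ n - s` for `1 ≤ s ≤ l` (here `i.getD t 0` is the entry `i_{t+1}`). -/
def memS (n l : ℕ) (i : List ℕ) : Prop :=
  i.length = l ∧ ∀ t < l, i.getD t 0 + t + 1 ≤ n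

/-- The ordered set remaining from `{0, …, n}` after performing the first `r`
removal steps prescribed by `i`: at each step the element at (0-indexed)
position `i_r + 1` of the remaining set is removed. -/
def restAfter (n : ℕ) (i : List ℕ) (r : ℕ) : List ℕ :=
  (i.take r).foldl (fun L a => L.eraseIdx (a + 1)) (List.range (n + 1))

/-- The ordered set remaining from `{0, …, n}` after the whole removal
procedure prescribed by `i`. -/
def restList (n : ℕ) (i : List ℕ) : List ℕ := restAfter n i i.length

/-- The element `e_{r+1}` removed at (0-indexed) step `r` of the removal
procedure on `{0, …, n}` prescribed by `i`. -/
def elemRemoved (n : ℕ) (i : List ℕ) (r : ℕ) : ℕ :=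
  (restAfter n i r).getD (i.getD r 0 + 1) 0

/-- The component `α_s` of `Ψ_p(i)`, for the interval `(a, b) = (p_{s-1}, p_s)`:
the set of (0-indexed) steps at which an element strictly between `a` and `b`
is removed. -/
def psiAlpha (n : ℕ) (i : List ℕ) (a b : ℕ) : Finset ℕ :=
  (Finset.range i.length).filter
    (fun r => a < elemRemoved n i r ∧ elemRemoved n i r < b)

/-- The component `j_s` of `Ψ_p(i)`, for the interval `(a, b) = (p_{s-1}, p_s)`:
its `u`-th entry is `w - 1` where the `u`-th element of `(a, b)` to be removed
is, at the moment of its removal, the `w`-th smallest element of `(a, b)` still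
present. -/
def psiJ (n : ℕ) (i : List ℕ) (a b : ℕ) : List ℕ :=
  ((List.range i.length).filter
      (fun r => decide (a < elemRemoved n i r ∧ elemRemoved n i r < b))).map
    (fun r => ((restAfter n i r).filter
      (fun y => decide (a < y ∧ y < elemRemoved n i r))).length)

/-- `α` is a `(q_0, …, q_{k-1})`-shuffle: an ordered partition of
`{0, …, q_0 + ⋯ + q_{k-1} - 1}` with `|α_s| = q_s`. -/
def IsShuffleF {k : ℕ} (q : Fin k → ℕ) (α : Fin k → Finset ℕ) : Prop :=
  (∀ s, (α s).card = q s) ∧ (∀ s t, s ≠ t → Disjoint (α s) (α t)) ∧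
    Finset.univ.biUnion α = Finset.range (∑ s, q s)

/-- The sign exponent `(α)` of a shuffle: the number of pairs `(a, b)` with
`a ∈ α_s`, `b ∈ α_t`, `s < t` and `a > b`. -/
def shuffleExpN (k : ℕ) (α : ℕ → Finset ℕ) : ℕ :=
  ∑ s ∈ Finset.range k, ∑ t ∈ Finset.range k,
    if s < t then ∑ a ∈ α s, ((α t).filter (fun b => b < a)).card else 0

/-- Vertex map of the derived operator. -/
def derivedFun (f : ℕ → ℕ) : ℕ → ℕ := fun t => if t = 0 then 0 else f (t - 1) + 1

/-- Vertex map of the face map `δ_j`. -/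
def deltaFun (j : ℕ) : ℕ → ℕ := fun t => if t < j then t else t + 1

/-- Vertex map of the degeneracy map `σ_j`. -/
def sigmaFun (j : ℕ) : ℕ → ℕ := fun t => if t ≤ j then t else t - 1

/-- Vertex map of the Szczarba operator `D_i^k`. -/
def DFun : List ℕ → ℕ → ℕ → ℕ := fun i k => match i, k with
  | [], _ => id
  | (i1 :: i'), k =>
    if k < i1 then deltaFun (i1 - k) ∘ sigmaFun 0 ∘ derivedFun (DFun i' k)
    else if k = i1 then derivedFun (DFun i' k)
    else sigmaFun 0 ∘ derivedFun (DFun i' (k - 1))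

/-- The morphism `[b] ⟶ [a]` in the simplex category whose vertex map is (the
monotone clamped version of) `f`.  When `f` is monotone and maps `[b]` into `[a]`
this is exactly the morphism with vertex map `f`. -/
def mkHomF (a b : ℕ) (f : ℕ → ℕ) : (SimplexCategory.mk b ⟶ SimplexCategory.mk a) :=
  SimplexCategory.mkHom
    { toFun := fun t => ⟨min ((Finset.range (t.1 + 1)).sup f) a,
        Nat.lt_succ_of_le (min_le_right _ _)⟩
      monotone' := fun u v huv => by
        simp only [Fin.mk_le_mk]
        exact min_le_min
          (Finset.sup_mono (Finset.range_subset_range.mpr (Nat.succ_le_succ huv))) le_rfl }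

/-- The natural simplicial operator `X_a → X_b` with vertex map `f : [b] → [a]`. -/
def simpOp (X : SSet) (f : ℕ → ℕ) (a b : ℕ) (x : X _⦋a⦌) : X _⦋b⦌ :=
  X.map (mkHomF a b f).op x

/-- The natural simplicial operator `G_a → G_b` with vertex map `f : [b] → [a]`,
for a simplicial group `G`. -/
def grpOp (G : CategoryTheory.SimplicialObject GrpCat) (f : ℕ → ℕ) (a b : ℕ)
    (g : G _⦋a⦌) : G _⦋b⦌ :=
  (G.map (mkHomF a b f).op) g

/-- A twisting function `τ : X_{>0} → G`. -/
structure TwistingFn (X : SSet) (G : CategoryTheory.SimplicialObject GrpCat) where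
  map : ∀ n : ℕ, X _⦋n + 1⦌ → G _⦋n⦌
  d0 : ∀ (n : ℕ) (x : X _⦋n + 2⦌),
    grpOp G (deltaFun 0) (n + 1) n (map (n + 1) x)
      = (map n (simpOp X (deltaFun 0) (n + 2) (n + 1) x))⁻¹
        * map n (simpOp X (deltaFun 1) (n + 2) (n + 1) x)
  dk : ∀ (n k : ℕ) (x : X _⦋n + 2⦌), 0 < k → k < n + 2 →
    grpOp G (deltaFun k) (n + 1) n (map (n + 1) x)
      = map n (simpOp X (deltaFun (k + 1)) (n + 2) (n + 1) x)
  sk : ∀ (n k : ℕ) (x : X _⦋n + 1⦌), k < n + 1 →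
    grpOp G (sigmaFun k) n (n + 1) (map n x)
      = map (n + 1) (simpOp X (sigmaFun (k + 1)) (n + 1) (n + 2) x)
  s0 : ∀ (n : ℕ) (x : X _⦋n⦌), map n (simpOp X (sigmaFun 0) n (n + 1) x) = 1

/-- Szczarba's operator `Sz_i : X_{n+1} → G_n`. -/
def Sz {X : SSet} {G : CategoryTheory.SimplicialObject GrpCat} (τ : TwistingFn X G)
    (n : ℕ) (i : List ℕ) (x : X _⦋n + 1⦌) : G _⦋n⦌ :=
  ((List.range (n + 1)).map (fun r =>
    grpOp G (DFun i r) (n - r) n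
      ((τ.map (n - r) (simpOp X (fun t => t + r) (n + 1) ((n - r) + 1) x))⁻¹))).prod

/-- The group component of the operator `hatSz_i : X_n → X_n × G_n`. -/
def hatSzG {X : SSet} {G : CategoryTheory.SimplicialObject GrpCat} (τ : TwistingFn X G)
    (n : ℕ) (i : List ℕ) (x : X _⦋n⦌) : G _⦋n⦌ :=
  ((List.range n).map (fun r =>
    grpOp G (DFun i (r + 1)) (n - (r + 1)) n
      ((τ.map (n - (r + 1)) (simpOp X (fun t => t + r) n ((n - (r + 1)) + 1) x))⁻¹))).prod

/-- Szczarba's operator `hatSz_i : X_n → (X ×_τ G)_n = X_n × G_n`. -/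
def hatSz {X : SSet} {G : CategoryTheory.SimplicialObject GrpCat} (τ : TwistingFn X G)
    (n : ℕ) (i : List ℕ) (x : X _⦋n⦌) : X _⦋n⦌ × G _⦋n⦌ :=
  (simpOp X (DFun i 0) n n x, hatSzG τ n i x)

/-- The `r`-fold iterate of the zeroth face map of the twisted Cartesian
product `X ×_τ G`. -/
def twD0pow {X : SSet} {G : CategoryTheory.SimplicialObject GrpCat} (τ : TwistingFn X G) :
    (r : ℕ) → (m : ℕ) → X _⦋m + r⦌ × (G _⦋m + r⦌ : Type _) → X _⦋m⦌ × (G _⦋m⦌ : Type _) := fun r m z => match r, m, z with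
  | 0, _, z => z
  | r + 1, m, z =>
      twD0pow τ r m
        (simpOp X (deltaFun 0) (m + r + 1) (m + r) z.1,
         τ.map (m + r) z.1 * grpOp G (deltaFun 0) (m + r + 1) (m + r) z.2)

/-- Vertex map of the iterated degeneracy `s_B` on a finite set `B`. -/
def degenFun (B : Finset ℕ) : ℕ → ℕ := fun t => t - (B.filter (fun b => b < t)).card

/-- The map `Φ : S_n × [n] → S_{n-1} × [n-1]`. -/
def Phi : List ℕ → ℕ → List ℕ × ℕ := fun i p => match i, p with
  | [], _ => ([], 0)
  | (i1 :: i'), p =>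
    if p < i1 then ((i1 - 1) :: (Phi i' p).1, (Phi i' p).2 + 1)
    else if p = i1 ∨ p = i1 + 1 then (i', 0)
    else (i1 :: (Phi i' (p - 1)).1, (Phi i' (p - 1)).2 + 1)

/-!
Write `x = s_p y` and `j = (Φ(i, p + 1))₂`. Every component of `hatSz_i x` is obtained from
`y` by a natural operator: `D_i^0 s_p` on the `X` side, and on the `G` side, since
`∂₀ʳ s_p = s_{p-r} ∂₀ʳ`, `τ s_{m+1} = s_m τ` and `τ s_0 = 1`, the factor `D_i^{r+1} σ(∂₀ʳ x)`
is `D_i^{r+1} s_{p-r-1}` applied to `σ(∂₀ʳ y)` for `r < p`, trivial for `r = p`, and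
`D_i^{r+1}` applied to `σ(∂₀ʳ x)` for `r > p`. A combinatorial induction on `i` shows that
the vertex map of each of these operators takes the same value at `j` and `j + 1`, so each of
them factors through `σ_j`; since the image of `s_j` in `G` is a subgroup, the product lies in
it too.
-/

lemma monotone_deltaFun (j : ℕ) : Monotone (deltaFun j) := by
  intro a b h; simp only [deltaFun]; split_ifs <;> omega

lemma monotone_sigmaFun (j : ℕ) : Monotone (sigmaFun j) := by
  intro a b h; simp only [sigmaFun]; split_ifs <;> omega

lemma monotone_derivedFun {f : ℕ → ℕ} (hf : Monotone f) : Monotone (derivedFun f) := by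
  intro a b h
  simp only [derivedFun]
  split_ifs
  · exact le_rfl
  · omega
  · omega
  · exact Nat.succ_le_succ (hf (Nat.sub_le_sub_right h 1))

lemma monotone_DFun (i : List ℕ) (k : ℕ) : Monotone (DFun i k) := by
  induction i generalizing k with
  | nil => exact monotone_id
  | cons i1 i' ih =>
    simp only [DFun]
    split_ifs
    · exact (monotone_deltaFun _).comp ((monotone_sigmaFun 0).comp (monotone_derivedFun (ih k)))
    · exact monotone_derivedFun (ih k)
    · exact (monotone_sigmaFun 0).comp (monotone_derivedFun (ih (k - 1)))

@[simp]
lemma DFun_zero (i : List ℕ) (k : ℕ) : DFun i k 0 = 0 := by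
  cases i with
  | nil => rfl
  | cons i1 i' =>
    simp only [DFun]
    split_ifs <;> simp [derivedFun, sigmaFun, deltaFun]
    omega

lemma DFun_cons_succ (i1 : ℕ) (i' : List ℕ) (k t : ℕ) :
    DFun (i1 :: i') k (t + 1) =
      if k < i1 then deltaFun (i1 - k) (DFun i' k t)
      else if k = i1 then DFun i' k t + 1 else DFun i' (k - 1) t := by
  simp only [DFun]
  split_ifs <;> simp [derivedFun, sigmaFun]

lemma Phi_cons_succ_snd (i1 : ℕ) (i' : List ℕ) (p : ℕ) :
    (Phi (i1 :: i') (p + 1)).2 =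
      if p + 1 < i1 then (Phi i' (p + 1)).2 + 1
      else if p + 1 = i1 ∨ p = i1 then 0 else (Phi i' p).2 + 1 := by
  simp only [Phi]
  split_ifs <;> simp_all

lemma memS_tail {n i1 : ℕ} {i' : List ℕ} (h : memS (n + 1) (n + 1) (i1 :: i')) : memS n n i' := by
  refine ⟨by simpa using h.1, fun t ht => ?_⟩
  have := h.2 (t + 1) (by omega)
  simp only [List.getD_cons_succ] at this
  omega

lemma memS_head_le {n i1 : ℕ} {i' : List ℕ} (h : memS (n + 1) (n + 1) (i1 :: i')) : i1 ≤ n := by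
  have := h.2 0 (by omega)
  simp only [List.getD_cons_zero] at this
  omega

lemma Phi_succ_snd_lt {n : ℕ} {i : List ℕ} (hi : memS n n i) {p : ℕ} (hp : p < n) :
    (Phi i (p + 1)).2 < n := by
  induction i generalizing n p with
  | nil => simp [memS] at hi; omega
  | cons i1 i' ih =>
    obtain ⟨n, rfl⟩ : ∃ m, n = m + 1 := ⟨n - 1, by have := hi.1; simp at this; omega⟩
    have := memS_head_le hi
    rw [Phi_cons_succ_snd]
    split_ifs
    · have := ih (memS_tail hi) (p := p) (by omega); omega
    · omega
    · have := ih (memS_tail hi) (p := p - 1) (by omega)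
      rw [Nat.sub_add_cancel (by omega)] at this
      omega

/-- The second alternative suffices: in the `k`-th component of `hatSz_i (s_p y)` the operator
`D_i^k` is followed by `σ_{p-k}`, which identifies `p - k` and `p - k + 1`. -/
theorem DFun_Phi_succ_snd {n : ℕ} {i : List ℕ} (hi : memS n n i) {p : ℕ} (hp : p < n)
    {k : ℕ} (hk : k ≠ p + 1) :
    DFun i k (Phi i (p + 1)).2 = DFun i k ((Phi i (p + 1)).2 + 1) ∨
      (k ≤ p ∧ DFun i k (Phi i (p + 1)).2 = p - k ∧
        DFun i k ((Phi i (p + 1)).2 + 1) = p - k + 1) := by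
  induction i generalizing n p k with
  | nil => simp [memS] at hi; omega
  | cons i1 i' ih =>
    obtain ⟨n, rfl⟩ : ∃ m, n = m + 1 := ⟨n - 1, by have := hi.1; simp at this; omega⟩
    have := memS_head_le hi
    rw [Phi_cons_succ_snd]
    split_ifs
    · have ih0 := ih (memS_tail hi) (p := p) (k := k) (by omega) hk
      have ih1 := ih (memS_tail hi) (p := p) (k := k - 1) (by omega)
      simp only [DFun_cons_succ, deltaFun]
      split_ifs <;> omega
    · simp only [zero_add, DFun_zero, DFun_cons_succ, deltaFun]
      split_ifs <;> omega
    · obtain ⟨p, rfl⟩ : ∃ q, p = q + 1 := ⟨p - 1, by omega⟩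
      have ih0 := ih (memS_tail hi) (p := p) (k := k) (by omega)
      have ih1 := ih (memS_tail hi) (p := p) (k := k - 1) (by omega)
      simp only [DFun_cons_succ, deltaFun]
      split_ifs <;> omega

lemma mkHomF_apply {f : ℕ → ℕ} (hf : Monotone f) (a b : ℕ) (t : Fin (b + 1)) :
    ((mkHomF a b f).toOrderHom t : ℕ) = min (f t) a := by
  have hsup : (Finset.range (t.1 + 1)).sup f = f t :=
    le_antisymm (Finset.sup_le fun u hu => hf (Nat.lt_succ_iff.mp (Finset.mem_range.mp hu)))
      (Finset.le_sup (Finset.self_mem_range_succ t.1))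
  show min ((Finset.range (t.1 + 1)).sup f) a = _
  rw [hsup]

lemma mkHomF_ext {f g : ℕ → ℕ} (hf : Monotone f) (hg : Monotone g) {a b : ℕ}
    (h : ∀ t ≤ b, f t = g t) : mkHomF a b f = mkHomF a b g := by
  ext t : 4
  rw [mkHomF_apply hf, mkHomF_apply hg, h t (Nat.lt_succ_iff.mp t.isLt)]

lemma monotone_min_comp {f g : ℕ → ℕ} (hf : Monotone f) (hg : Monotone g) (b : ℕ) :
    Monotone (fun t => f (min (g t) b)) :=
  fun _ _ h => hf (min_le_min_right b (hg h))

lemma mkHomF_comp {f g : ℕ → ℕ} (hf : Monotone f) (hg : Monotone g) (a b c : ℕ) :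
    mkHomF b c g ≫ mkHomF a b f = mkHomF a c (fun t => f (min (g t) b)) := by
  ext t : 4
  rw [mkHomF_apply (monotone_min_comp hf hg b), SimplexCategory.comp_toOrderHom,
    OrderHom.comp_coe, Function.comp_apply, mkHomF_apply hf, mkHomF_apply hg]

lemma mkHomF_sigmaFun {n j : ℕ} (hj : j ≤ n) :
    mkHomF n (n + 1) (sigmaFun j) = SimplexCategory.σ ⟨j, Nat.lt_succ_of_le hj⟩ := by
  ext t : 4
  rw [mkHomF_apply (monotone_sigmaFun j)]
  simp only [SimplexCategory.σ, SimplexCategory.mkHom, SimplexCategory.Hom.toOrderHom_mk,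
    Fin.predAboveOrderHom_coe, sigmaFun]
  have ht := t.isLt
  simp only [SimplexCategory.len_mk] at ht
  by_cases htj : t.1 ≤ j
  · rw [Fin.predAbove_of_le_castSucc _ _ (Fin.le_def.mpr htj), if_pos htj]
    simp only [Fin.coe_castPred]
    omega
  · rw [Fin.predAbove_of_castSucc_lt _ _ (Fin.lt_def.mpr (by simp; omega)), if_neg htj]
    simp only [Fin.val_pred]
    omega

lemma exists_mkHomF_eq_sigmaFun_comp {f : ℕ → ℕ} (hf : Monotone f) {a n j : ℕ} (hj : j ≤ n)
    (h : f j = f (j + 1)) :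
    ∃ θ : SimplexCategory.mk n ⟶ SimplexCategory.mk a,
      mkHomF a (n + 1) f = mkHomF n (n + 1) (sigmaFun j) ≫ θ := by
  rw [mkHomF_sigmaFun hj]
  refine SimplexCategory.eq_σ_comp_of_not_injective' _ _ (Fin.ext ?_)
  simp only [mkHomF_apply hf, Fin.val_castSucc, Fin.val_succ, h]

section Operators

variable (X : SSet) (G : SimplicialObject GrpCat)

lemma simpOp_simpOp {f g : ℕ → ℕ} (hf : Monotone f) (hg : Monotone g) (a b c : ℕ)
    (x : X _⦋a⦌) :
    simpOp X g b c (simpOp X f a b x) = simpOp X (fun t => f (min (g t) b)) a c x := by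
  simp only [simpOp, ← Functor.map_comp_apply, ← op_comp, mkHomF_comp hf hg]

def grpOpHom (f : ℕ → ℕ) (a b : ℕ) : G _⦋a⦌ →* G _⦋b⦌ := (G.map (mkHomF a b f).op).hom

lemma grpOp_inv (f : ℕ → ℕ) (a b : ℕ) (g : G _⦋a⦌) :
    grpOp G f a b g⁻¹ = (grpOp G f a b g)⁻¹ :=
  map_inv (grpOpHom G f a b) g

lemma grpOp_one (f : ℕ → ℕ) (a b : ℕ) : grpOp G f a b 1 = 1 :=
  map_one (grpOpHom G f a b)

lemma grpOp_grpOp {f g : ℕ → ℕ} (hf : Monotone f) (hg : Monotone g) (a b c : ℕ)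
    (x : G _⦋a⦌) :
    grpOp G g b c (grpOp G f a b x) = grpOp G (fun t => f (min (g t) b)) a c x := by
  simp only [grpOp, ← mkHomF_comp hf hg, op_comp, G.map_comp]
  rfl

variable {X G}

lemma simpOp_mem_range_sigmaFun {f : ℕ → ℕ} (hf : Monotone f) {a n j : ℕ} (hj : j ≤ n)
    (h : f j = f (j + 1)) (x : X _⦋a⦌) :
    simpOp X f a (n + 1) x ∈ Set.range (simpOp X (sigmaFun j) n (n + 1)) := by
  obtain ⟨θ, hθ⟩ := exists_mkHomF_eq_sigmaFun_comp hf (a := a) hj h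
  exact ⟨X.map θ.op x, by simp only [simpOp, hθ, op_comp, Functor.map_comp_apply]⟩

lemma grpOp_mem_range_sigmaFun {f : ℕ → ℕ} (hf : Monotone f) {a n j : ℕ} (hj : j ≤ n)
    (h : f j = f (j + 1)) (g : G _⦋a⦌) :
    grpOp G f a (n + 1) g ∈ (grpOpHom G (sigmaFun j) n (n + 1)).range := by
  obtain ⟨θ, hθ⟩ := exists_mkHomF_eq_sigmaFun_comp hf (a := a) hj h
  exact ⟨G.map θ.op g, by simp only [grpOpHom, grpOp, hθ, op_comp, G.map_comp]; rfl⟩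

end Operators

lemma face_simpOp_sigmaFun (X : SSet) {n q r p : ℕ} (hrp : r ≤ p) (hpn : p ≤ n)
    (hn : n = r + q) (y : X _⦋n⦌) :
    simpOp X (· + r) (n + 1) (q + 1) (simpOp X (sigmaFun p) n (n + 1) y)
      = simpOp X (sigmaFun (p - r)) q (q + 1) (simpOp X (· + r) n q y) := by
  rw [simpOp_simpOp X (monotone_sigmaFun p) (add_left_mono (a := r)),
    simpOp_simpOp X (add_left_mono (a := r)) (monotone_sigmaFun (p - r))]
  unfold simpOp
  rw [mkHomF_ext (monotone_min_comp (monotone_sigmaFun p) (add_left_mono (a := r)) _)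
    (monotone_min_comp (add_left_mono (a := r)) (monotone_sigmaFun (p - r)) _) fun t ht => ?_]
  simp only [sigmaFun]
  split_ifs <;> omega

namespace TwistingFn

variable {X : SSet} {G : SimplicialObject GrpCat} (τ : TwistingFn X G)

lemma map_face_simpOp_sigmaFun_of_lt {n c r p : ℕ} (hrp : r < p) (hn : n = r + (c + 1))
    (hpn : p ≤ n) (y : X _⦋n⦌) :
    τ.map (c + 1) (simpOp X (· + r) (n + 1) (c + 1 + 1) (simpOp X (sigmaFun p) n (n + 1) y))
      = grpOp G (sigmaFun (p - r - 1)) c (c + 1) (τ.map c (simpOp X (· + r) n (c + 1) y)) := by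
  rw [face_simpOp_sigmaFun X hrp.le hpn hn, τ.sk c _ _ (by omega), Nat.sub_add_cancel (by omega)]

lemma map_face_simpOp_sigmaFun_self {n q p : ℕ} (hn : n = p + q) (y : X _⦋n⦌) :
    τ.map q (simpOp X (· + p) (n + 1) (q + 1) (simpOp X (sigmaFun p) n (n + 1) y)) = 1 := by
  rw [face_simpOp_sigmaFun X le_rfl (by omega) hn, Nat.sub_self, τ.s0]

end TwistingFn

section Degenerate

variable {X : SSet} {G : SimplicialObject GrpCat}

lemma simpOp_DFun_zero_sigmaFun_mem_range {n p : ℕ} {i : List ℕ} (hi : memS (n + 1) (n + 1) i)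
    (hpn : p ≤ n) (y : X _⦋n⦌) :
    simpOp X (DFun i 0) (n + 1) (n + 1) (simpOp X (sigmaFun p) n (n + 1) y)
      ∈ Set.range (simpOp X (sigmaFun (Phi i (p + 1)).2) n (n + 1)) := by
  rw [simpOp_simpOp X (monotone_sigmaFun p) (monotone_DFun i 0)]
  refine simpOp_mem_range_sigmaFun
    (monotone_min_comp (monotone_sigmaFun p) (monotone_DFun i 0) _)
    (Nat.lt_succ_iff.mp (Phi_succ_snd_lt hi (p := p) (by omega))) ?_ y
  rcases DFun_Phi_succ_snd hi (p := p) (by omega) (k := 0) (by omega) with h | ⟨-, h₀, h₁⟩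
  · rw [h]
  · simp only [h₀, h₁, sigmaFun]
    split_ifs <;> omega

lemma grpOp_DFun_map_face_sigmaFun_mem_range (τ : TwistingFn X G) {n p : ℕ} {i : List ℕ}
    (hi : memS (n + 1) (n + 1) i) (hpn : p ≤ n) (y : X _⦋n⦌) {r q : ℕ} (hn : n = r + q) :
    grpOp G (DFun i (r + 1)) q (n + 1)
        ((τ.map q (simpOp X (· + r) (n + 1) (q + 1) (simpOp X (sigmaFun p) n (n + 1) y)))⁻¹)
      ∈ (grpOpHom G (sigmaFun (Phi i (p + 1)).2) n (n + 1)).range := by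
  have hj := Nat.lt_succ_iff.mp (Phi_succ_snd_lt hi (p := p) (by omega))
  have hD := DFun_Phi_succ_snd hi (p := p) (by omega) (k := r + 1)
  rcases lt_trichotomy r p with hrp | rfl | hpr
  · obtain ⟨c, rfl⟩ : ∃ c, q = c + 1 := ⟨q - 1, by omega⟩
    rw [τ.map_face_simpOp_sigmaFun_of_lt hrp hn hpn, ← grpOp_inv,
      grpOp_grpOp G (monotone_sigmaFun _) (monotone_DFun i (r + 1))]
    refine grpOp_mem_range_sigmaFun
      (monotone_min_comp (monotone_sigmaFun _) (monotone_DFun i _) _) hj ?_ _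
    rcases hD (by omega) with h | ⟨-, h₀, h₁⟩
    · rw [h]
    · simp only [h₀, h₁, sigmaFun]
      split_ifs <;> omega
  · rw [τ.map_face_simpOp_sigmaFun_self hn, inv_one, grpOp_one]
    exact Subgroup.one_mem _
  · refine grpOp_mem_range_sigmaFun (monotone_DFun i _) hj ?_ _
    rcases hD (by omega) with h | ⟨hk, -⟩
    · exact h
    · omega

lemma hatSzG_sigmaFun_mem_range (τ : TwistingFn X G) {n p : ℕ} {i : List ℕ}
    (hi : memS (n + 1) (n + 1) i) (hpn : p ≤ n) (y : X _⦋n⦌) :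
    hatSzG τ (n + 1) i (simpOp X (sigmaFun p) n (n + 1) y)
      ∈ (grpOpHom G (sigmaFun (Phi i (p + 1)).2) n (n + 1)).range := by
  refine list_prod_mem fun g hg => ?_
  obtain ⟨r, hr, rfl⟩ := List.mem_map.mp hg
  exact grpOp_DFun_map_face_sigmaFun_mem_range τ hi hpn y (by simp at hr; omega)

end Degenerate

/-- If `x ∈ X_{n+1}` (`n ≥ 0`) is degenerate, then for every
`i ∈ S_{n+1}` the simplex `hatSz_i x ∈ (X ×_τ G)_{n+1}` is degenerate, i.e.
lies in the image of some degeneracy operator of the twisted Cartesian product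
(whose degeneracies act componentwise). -/
theorem szczarba_hatSz_of_degenerate (X : SSet) (G : CategoryTheory.SimplicialObject GrpCat)
    (τ : TwistingFn X G) (n : ℕ) (x : X _⦋n + 1⦌)
    (hx : ∃ j ≤ n, ∃ y : X _⦋n⦌, x = simpOp X (sigmaFun j) n (n + 1) y)
    (i : List ℕ) (hi : memS (n + 1) (n + 1) i) :
    ∃ j, j + 1 ≤ n + 1 ∧ ∃ z : X _⦋n⦌ × (G _⦋n⦌ : Type _),
      hatSz τ (n + 1) i x
        = (simpOp X (sigmaFun j) n (n + 1) z.1, grpOp G (sigmaFun j) n (n + 1) z.2) := by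
  obtain ⟨p, hpn, y, rfl⟩ := hx
  obtain ⟨z₁, hz₁⟩ := simpOp_DFun_zero_sigmaFun_mem_range hi hpn y
  obtain ⟨z₂, hz₂⟩ := hatSzG_sigmaFun_mem_range τ hi hpn y
  exact ⟨_, Phi_succ_snd_lt hi (by omega), (z₁, z₂), Prod.ext hz₁.symm hz₂.symm⟩
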